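/- arXiv:1102.2039 — 3 statements merged into one kernel-verified Lean document; each statement's English description precedes it below -/
import Mathlib

section
/- If C, C' ∈ ch^q_F(A) are distinct chambers with X_C = X_{C'}, then tilde(C) ∩ tilde(C') = ∅; consequently S(C) ∩ S(C') = ∅. -/
open Set

namespace IY

/-- An affine hyperplane arrangement in `ℝ^ℓ`, given by `n` affine-linear forms
with nonzero linear parts; the `i`-th hyperplane is the zero set of `α i`. -/
structure Arrangement (ℓ n : ℕ) where
  α : Fin n → ((Fin ℓ → ℝ) →ᵃ[ℝ] ℝ)
  nonzero : ∀ i, (α i).linear ≠ 0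

namespace Arrangement

variable {ℓ n : ℕ} (A : Arrangement ℓ n)

/-- The hyperplane `H_i = {α_i = 0}`. -/
def H (i : Fin n) : Set (Fin ℓ → ℝ) := {x | A.α i x = 0}

/-- The real complement of the subarrangement indexed by `s`. -/
def compOn (s : Set (Fin n)) : Set (Fin ℓ → ℝ) := {x | ∀ i ∈ s, A.α i x ≠ 0}

/-- Chambers of the subarrangement indexed by `s` : connected components of its
real complement. -/
def IsChamberOn (s : Set (Fin n)) (C : Set (Fin ℓ → ℝ)) : Prop :=
  ∃ x ∈ A.compOn s, C = connectedComponentIn (A.compOn s) x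

/-- Chambers of the full arrangement. -/
def IsChamber (C : Set (Fin ℓ → ℝ)) : Prop := A.IsChamberOn Set.univ C

/-- The intersection poset of the subarrangement indexed by `s` : nonempty
intersections of subfamilies (the empty intersection giving `ℝ^ℓ`). -/
def LOn (s : Set (Fin n)) (X : Set (Fin ℓ → ℝ)) : Prop :=
  X.Nonempty ∧ ∃ t : Set (Fin n), t ⊆ s ∧ X = ⋂ i ∈ t, A.H i

/-- The intersection poset `L(A)`. -/
def L (X : Set (Fin ℓ → ℝ)) : Prop := A.LOn Set.univ X

/-- The real part of a point of `ℂ^ℓ`. -/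
def reP {ℓ : ℕ} (z : Fin ℓ → ℂ) : Fin ℓ → ℝ := fun j => (z j).re

/-- The imaginary part of a point of `ℂ^ℓ`. -/
def imP {ℓ : ℕ} (z : Fin ℓ → ℂ) : Fin ℓ → ℝ := fun j => (z j).im

/-- The point `x + iv` of `ℂ^ℓ`. -/
def mkC {ℓ : ℕ} (x v : Fin ℓ → ℝ) : Fin ℓ → ℂ := fun j => ⟨x j, v j⟩

/-- The complexified complement `M(A) = ℂ^ℓ \ ⋃ H_ℂ`; a point `x + iv` lies on
`H_ℂ = {α_ℂ = 0}` iff `α(x) = 0` and the linear part of `α` kills `v`. -/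
def M : Set (Fin ℓ → ℂ) :=
  {z | ∀ i : Fin n, ¬(A.α i (reP z) = 0 ∧ (A.α i).linear (imP z) = 0)}

end Arrangement

/-- Dimension of a subset of `ℝ^ℓ` (for affine subspaces, their dimension). -/
noncomputable def dimS {ℓ : ℕ} (X : Set (Fin ℓ → ℝ)) : ℕ :=
  Module.finrank ℝ (affineSpan ℝ X).direction

/-- The direction `τ(X)` of (the affine span of) a subset of `ℝ^ℓ`. -/
noncomputable def tau {ℓ : ℕ} (X : Set (Fin ℓ → ℝ)) : Submodule ℝ (Fin ℓ → ℝ) :=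
  (affineSpan ℝ X).direction

/-- A flag in `ℝ^ℓ` given by defining affine-linear forms `h_1, …, h_ℓ`
(0-indexed: `h j` is the form `h_{j+1}`). -/
structure Flag (ℓ : ℕ) where
  h : Fin ℓ → ((Fin ℓ → ℝ) →ᵃ[ℝ] ℝ)

namespace Flag

variable {ℓ : ℕ} (𝓕 : Flag ℓ)

/-- The flag subspace `F^q = {h_{q+1} = ⋯ = h_ℓ = 0}`. -/
def F (q : ℕ) : Set (Fin ℓ → ℝ) := {x | ∀ j : Fin ℓ, q ≤ (j : ℕ) → 𝓕.h j x = 0}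

/-- `𝓕.hq q` is the form `h_q` in 1-indexed notation (junk value `0` out of range). -/
noncomputable def hq (q : ℕ) : (Fin ℓ → ℝ) →ᵃ[ℝ] ℝ :=
  if hlt : q - 1 < ℓ then 𝓕.h ⟨q - 1, hlt⟩ else 0

end Flag

/-- Genericity of the flag: for every `X ∈ L(A)`, `F^q ∩ X` is an affine subspace
of dimension `q + dim X - ℓ`, empty when `q + dim X < ℓ`. -/
def GenericFlag {ℓ n : ℕ} (A : Arrangement ℓ n) (𝓕 : Flag ℓ) : Prop :=
  ∀ X, A.L X → ∀ q, q ≤ ℓ →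
    (ℓ ≤ q + dimS X →
      ∃ W : AffineSubspace ℝ (Fin ℓ → ℝ), (W : Set (Fin ℓ → ℝ)).Nonempty ∧
        (W : Set (Fin ℓ → ℝ)) = 𝓕.F q ∩ X ∧
        Module.finrank ℝ W.direction = q + dimS X - ℓ) ∧
    (q + dimS X < ℓ → 𝓕.F q ∩ X = ∅)

/-- Condition (1) of the Assumption, for the subarrangement indexed by `s`:
if a chamber `C` meets `F^q` but not `F^{q-1}`, then `h_q > 0` on `C ∩ F^q`. -/
def Cond1On {ℓ n : ℕ} (A : Arrangement ℓ n) (s : Set (Fin n)) (𝓕 : Flag ℓ) : Prop :=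
  ∀ q : ℕ, 1 ≤ q → q ≤ ℓ → ∀ C, A.IsChamberOn s C →
    (C ∩ 𝓕.F q).Nonempty → C ∩ 𝓕.F (q - 1) = ∅ →
    ∀ x ∈ C ∩ 𝓕.F q, 0 < 𝓕.hq q x

/-- Condition (2) of the Assumption, for the subarrangement indexed by `s`:
distinct `X, X'` in the intersection poset of dimension `ℓ - q` have different
`h_q`-values at their intersection points with `F^q`. -/
def Cond2On {ℓ n : ℕ} (A : Arrangement ℓ n) (s : Set (Fin n)) (𝓕 : Flag ℓ) : Prop :=
  ∀ q : ℕ, 1 ≤ q → q ≤ ℓ → ∀ X X', A.LOn s X → A.LOn s X' →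
    dimS X = ℓ - q → dimS X' = ℓ - q → X ≠ X' →
    ∀ p ∈ X ∩ 𝓕.F q, ∀ p' ∈ X' ∩ 𝓕.F q, 𝓕.hq q p ≠ 𝓕.hq q p'

/-- `C ∈ ch^q_F(A)` : `C` is a chamber meeting `F^q` but not `F^{q-1}`
(the latter condition being empty for `q = 0`, since `F^{-1} = ∅`). -/
def ChF {ℓ n : ℕ} (A : Arrangement ℓ n) (𝓕 : Flag ℓ) (q : ℕ)
    (C : Set (Fin ℓ → ℝ)) : Prop :=
  A.IsChamber C ∧ (C ∩ 𝓕.F q).Nonempty ∧ (q = 0 ∨ C ∩ 𝓕.F (q - 1) = ∅)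

/-- `X = X_C` for `C ∈ ch^q_F(A)` : `X ∈ L(A)` has dimension `ℓ - q` and meets
`F^q` exactly in the unique minimum point of `h_q` on the closure of `C ∩ F^q`. -/
def IsXC {ℓ n : ℕ} (A : Arrangement ℓ n) (𝓕 : Flag ℓ) (q : ℕ)
    (C X : Set (Fin ℓ → ℝ)) : Prop :=
  A.L X ∧ dimS X = ℓ - q ∧
  ∃ p : Fin ℓ → ℝ, X ∩ 𝓕.F q = {p} ∧ p ∈ closure (C ∩ 𝓕.F q) ∧
    ∀ y ∈ closure (C ∩ 𝓕.F q), 𝓕.hq q p ≤ 𝓕.hq q y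

/-- Indices of the hyperplanes parallel to `X`, i.e. `A_{[X]} = {H : τ(X) ⊆ τ(H)}`. -/
def parIdx {ℓ n : ℕ} (A : Arrangement ℓ n) (X : Set (Fin ℓ → ℝ)) : Set (Fin n) :=
  {i | tau X ≤ LinearMap.ker (A.α i).linear}

/-- `H_i ∈ Sep(C, C')` : the hyperplane `H_i` separates the chambers `C` and `C'`. -/
def SepCh {ℓ n : ℕ} (A : Arrangement ℓ n) (C C' : Set (Fin ℓ → ℝ)) (i : Fin n) : Prop :=
  ((∀ x ∈ C, 0 < A.α i x) ∧ (∀ y ∈ C', A.α i y < 0)) ∨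
  ((∀ x ∈ C, A.α i x < 0) ∧ (∀ y ∈ C', 0 < A.α i y))

/-- `H_i ∈ Sep(p₁, p₂)` : the hyperplane `H_i` meets the segment `[p₁, p₂]`. -/
def SepPt {ℓ n : ℕ} (A : Arrangement ℓ n) (p₁ p₂ : Fin ℓ → ℝ) (i : Fin n) : Prop :=
  ∃ w ∈ segment ℝ p₁ p₂, A.α i w = 0

/-- The piece `S(C)` attached to a chamber with `τ(X_C) = T` and base point `p`:
all `x + iv` with `v ∈ T` and `v ∉ τ(H)` for every `H ∈ Sep(p, x)`. -/
def S {ℓ n : ℕ} (A : Arrangement ℓ n) (T : Submodule ℝ (Fin ℓ → ℝ))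
    (p : Fin ℓ → ℝ) : Set (Fin ℓ → ℂ) :=
  {z | Arrangement.imP z ∈ T ∧
    ∀ i : Fin n, SepPt A p (Arrangement.reP z) i →
      (A.α i).linear (Arrangement.imP z) ≠ 0}

end IY

namespace IY
open Arrangement

/-- On a preconnected set where an affine form never vanishes, it has constant sign. -/
lemma sign_const {ℓ : ℕ} {s : Set (Fin ℓ → ℝ)} (hs : IsPreconnected s)
    (f : (Fin ℓ → ℝ) →ᵃ[ℝ] ℝ) (hf : ∀ y ∈ s, f y ≠ 0)
    {a b : Fin ℓ → ℝ} (ha : a ∈ s) (hb : b ∈ s) : 0 < f a * f b := by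
  have hcont : Continuous f := f.continuous_of_finiteDimensional
  have himg : IsPreconnected (f '' s) := hs.image f hcont.continuousOn
  rcases lt_trichotomy (f a) 0 with h1 | h1 | h1
  · rcases lt_trichotomy (f b) 0 with h2 | h2 | h2
    · nlinarith
    · exact absurd h2 (hf b hb)
    · exfalso
      have hsub : Set.Icc (f a) (f b) ⊆ f '' s :=
        himg.Icc_subset ⟨a, ha, rfl⟩ ⟨b, hb, rfl⟩
      obtain ⟨y, hy, hy0⟩ := hsub ⟨h1.le, h2.le⟩
      exact hf y hy hy0
  · exact absurd h1 (hf a ha)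
  · rcases lt_trichotomy (f b) 0 with h2 | h2 | h2
    · exfalso
      have hsub : Set.Icc (f b) (f a) ⊆ f '' s :=
        himg.Icc_subset ⟨b, hb, rfl⟩ ⟨a, ha, rfl⟩
      obtain ⟨y, hy, hy0⟩ := hsub ⟨h2.le, h1.le⟩
      exact hf y hy hy0
    · exact absurd h2 (hf b hb)
    · nlinarith

/-- Chambers are exactly sign cells. -/
lemma cell_eq {ℓ n : ℕ} (A : Arrangement ℓ n) (s : Set (Fin n)) {x : Fin ℓ → ℝ}
    (hx : x ∈ A.compOn s) :
    connectedComponentIn (A.compOn s) x = {y | ∀ i ∈ s, 0 < A.α i x * A.α i y} := by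
  apply Set.Subset.antisymm
  · intro y hy i hi
    exact sign_const isPreconnected_connectedComponentIn (A.α i)
      (fun z hz => by
        have hz2 : z ∈ A.compOn s := (connectedComponentIn_subset _ _) hz
        exact hz2 i hi)
      (mem_connectedComponentIn hx) hy
  · have hconv : Convex ℝ {y | ∀ i ∈ s, 0 < A.α i x * A.α i y} := by
      intro y₁ h₁ y₂ h₂ a b ha hb hab
      intro i hi
      have e : A.α i (a • y₁ + b • y₂) = a • A.α i y₁ + b • A.α i y₂ :=
        Convex.combo_affine_apply hab
      have u1 := h₁ i hi
      have u2 := h₂ i hi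
      rw [e]
      simp only [smul_eq_mul]
      rcases eq_or_lt_of_le ha with rfl | ha'
      · simp only [zero_add] at hab; subst hab; nlinarith
      · nlinarith [mul_nonneg hb u2.le]
    apply hconv.isPreconnected.subset_connectedComponentIn
    · intro i hi
      exact mul_self_pos.mpr (hx i hi)
    · intro y hy i hi
      have := hy i hi
      intro h0
      rw [h0, mul_zero] at this
      exact lt_irrefl 0 this

/-- The affine subspace cut out by the forms indexed by `t`. -/
noncomputable def zeroSub {ℓ n : ℕ} (A : Arrangement ℓ n) (t : Set (Fin n)) :
    AffineSubspace ℝ (Fin ℓ → ℝ) where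
  carrier := {x | ∀ i ∈ t, A.α i x = 0}
  smul_vsub_vadd_mem' c {x₁ x₂ x₃} h₁ h₂ h₃ := by
    intro i hi
    have e : A.α i (c • (x₁ -ᵥ x₂) +ᵥ x₃)
        = c • (A.α i x₁ -ᵥ A.α i x₂) +ᵥ A.α i x₃ := by
      rw [AffineMap.map_vadd, LinearMap.map_smul, AffineMap.linearMap_vsub]
    rw [e, h₁ i hi, h₂ i hi, h₃ i hi]
    simp

lemma zeroSub_coe {ℓ n : ℕ} (A : Arrangement ℓ n) (t : Set (Fin n)) :
    (⋂ i ∈ t, A.H i) = (zeroSub A t : Set (Fin ℓ → ℝ)) := by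
  ext x
  simp [Arrangement.H, zeroSub]
  rfl


/-- Distinct `C, C' ∈ ch^q_F(A)` with `X_C = X_{C'}` have
disjoint `tilde(C), tilde(C')`, and consequently `S(C) ∩ S(C') = ∅`. -/
theorem tilde_disjoint_S_disjoint (ℓ n : ℕ) (A : Arrangement ℓ n) (𝓕 : Flag ℓ)
    (hind : LinearIndependent ℝ fun j : Fin ℓ => (𝓕.h j).linear)
    (hgen : GenericFlag A 𝓕)
    (h1 : Cond1On A Set.univ 𝓕) (h2 : Cond2On A Set.univ 𝓕)
    (q : ℕ) (hq2 : q ≤ ℓ)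
    (C C' X : Set (Fin ℓ → ℝ)) (hne : C ≠ C')
    (hC : ChF A 𝓕 q C) (hC' : ChF A 𝓕 q C')
    (hX : IsXC A 𝓕 q C X) (hX' : IsXC A 𝓕 q C' X)
    (pC pC' : Fin ℓ → ℝ) (hpC : pC ∈ C ∩ 𝓕.F q) (hpC' : pC' ∈ C' ∩ 𝓕.F q)
    (Ct Ct' : Set (Fin ℓ → ℝ))
    (hCt : A.IsChamberOn (parIdx A X) Ct) (hCCt : C ⊆ Ct)
    (hCt' : A.IsChamberOn (parIdx A X) Ct') (hCCt' : C' ⊆ Ct') :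
    Ct ∩ Ct' = ∅ ∧ S A (tau X) pC ∩ S A (tau X) pC' = ∅ := by
  classical
  -- extract the data of X_C and X_{C'}
  obtain ⟨hXL, hXdim, p, hXF, hpcl, -⟩ := hX
  obtain ⟨-, -, p2, hXF2, hpcl2, -⟩ := hX'
  have hpp : p2 = p := by
    have h := hXF.symm.trans hXF2
    exact (Set.singleton_eq_singleton_iff.mp h).symm
  rw [hpp] at hpcl2
  have hpXF : p ∈ X ∩ 𝓕.F q := by rw [hXF]; exact Set.mem_singleton p
  obtain ⟨hpX, hpF⟩ := hpXF
  -- X as an affine subspace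
  obtain ⟨hXne, tX, -, hXeq⟩ := hXL
  have hXset : X = (zeroSub A tX : Set (Fin ℓ → ℝ)) := hXeq.trans (zeroSub_coe A tX)
  -- the element Y of L(A) of all hyperplanes through p
  set tY : Set (Fin n) := {i | A.α i p = 0} with htY
  have hpY : p ∈ zeroSub A tY := fun i hi => hi
  have hYL : A.L (zeroSub A tY : Set (Fin ℓ → ℝ)) :=
    ⟨⟨p, hpY⟩, tY, Set.subset_univ _, (zeroSub_coe A tY).symm⟩
  have hdimY : ℓ ≤ q + dimS (zeroSub A tY : Set (Fin ℓ → ℝ)) := by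
    by_contra hlt
    push_neg at hlt
    have hemp := (hgen _ hYL q hq2).2 hlt
    have hmem : p ∈ 𝓕.F q ∩ (zeroSub A tY : Set (Fin ℓ → ℝ)) := ⟨hpF, hpY⟩
    rw [hemp] at hmem
    exact hmem
  have edimX : dimS X = Module.finrank ℝ (zeroSub A tX).direction := by
    rw [hXset]; unfold dimS; rw [AffineSubspace.affineSpan_coe]
  have edimY : dimS (zeroSub A tY : Set (Fin ℓ → ℝ))
      = Module.finrank ℝ (zeroSub A tY).direction := by
    unfold dimS; rw [AffineSubspace.affineSpan_coe]
  have hpX' : p ∈ zeroSub A tX := by rw [hXset] at hpX; exact hpX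
  have htXY : tX ⊆ tY := fun i hi => hpX' i hi
  have hle : zeroSub A tY ≤ zeroSub A tX := fun x hx i hi => hx i (htXY hi)
  have hdirle := AffineSubspace.direction_le hle
  rw [edimX] at hXdim
  rw [edimY] at hdimY
  have hfr : Module.finrank ℝ (zeroSub A tX).direction
      ≤ Module.finrank ℝ (zeroSub A tY).direction := by omega
  have hdireq : (zeroSub A tY).direction = (zeroSub A tX).direction :=
    Submodule.eq_of_le_of_finrank_le hdirle hfr
  have htauX : tau X = (zeroSub A tX).direction := by
    unfold tau; rw [hXset, AffineSubspace.affineSpan_coe]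
  -- the key: every hyperplane through p is parallel to X
  have key : ∀ i : Fin n, A.α i p = 0 → tau X ≤ LinearMap.ker (A.α i).linear := by
    intro i hip
    rw [htauX, ← hdireq]
    intro v hv
    rw [AffineSubspace.mem_direction_iff_eq_vsub ⟨p, hpY⟩] at hv
    obtain ⟨p₁, h₁, p₂, h₂, rfl⟩ := hv
    have e := AffineMap.linearMap_vsub (A.α i) p₁ p₂
    have e1 : A.α i p₁ = 0 := h₁ i hip
    have e2 : A.α i p₂ = 0 := h₂ i hip
    rw [LinearMap.mem_ker, e, e1, e2]
    simp
  -- chamber data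
  obtain ⟨x₀, hx₀, hCtdef⟩ := hCt
  obtain ⟨x₀', hx₀', hCtdef'⟩ := hCt'
  obtain ⟨c₀, hc₀, hCdef⟩ := hC.1
  obtain ⟨c₀', hc₀', hCdef'⟩ := hC'.1
  have hpCmem : pC ∈ A.compOn Set.univ := by
    have h := hpC.1
    rw [hCdef] at h
    exact connectedComponentIn_subset _ _ h
  have hpC'mem : pC' ∈ A.compOn Set.univ := by
    have h := hpC'.1
    rw [hCdef'] at h
    exact connectedComponentIn_subset _ _ h
  have hCcell : C = {y | ∀ i ∈ (Set.univ : Set (Fin n)), 0 < A.α i pC * A.α i y} := by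
    have h := hpC.1
    rw [hCdef] at h
    rw [hCdef, connectedComponentIn_eq h, cell_eq A _ hpCmem]
  have hC'cell : C' = {y | ∀ i ∈ (Set.univ : Set (Fin n)), 0 < A.α i pC' * A.α i y} := by
    have h := hpC'.1
    rw [hCdef'] at h
    rw [hCdef', connectedComponentIn_eq h, cell_eq A _ hpC'mem]
  -- Goal 1
  have hdisj : Ct ∩ Ct' = ∅ := by
    rw [Set.eq_empty_iff_forall_notMem]
    rintro z ⟨hz1, hz2⟩
    rw [hCtdef] at hz1
    rw [hCtdef'] at hz2
    have hCtEq : Ct = Ct' := by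
      rw [hCtdef, hCtdef', connectedComponentIn_eq hz1, connectedComponentIn_eq hz2]
    have hsign : ∀ i : Fin n, 0 < A.α i pC * A.α i pC' := by
      intro i
      by_cases hpar : tau X ≤ LinearMap.ker (A.α i).linear
      · have hpCt : pC ∈ Ct := hCCt hpC.1
        have hpCt2 : pC' ∈ Ct := by rw [hCtEq]; exact hCCt' hpC'.1
        rw [hCtdef, cell_eq A _ hx₀] at hpCt hpCt2
        have h1 := hpCt i hpar
        have h2 := hpCt2 i hpar
        nlinarith [mul_pos h1 h2, sq_nonneg (A.α i x₀)]
      · have hp0 : A.α i p ≠ 0 := fun h0 => hpar (key i h0)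
        have hcont : Continuous (A.α i) := (A.α i).continuous_of_finiteDimensional
        have hclosed : ∀ c : ℝ, IsClosed {y : Fin ℓ → ℝ | 0 ≤ c * A.α i y} :=
          fun c => isClosed_le continuous_const (continuous_const.mul hcont)
        have hclC : ∀ y ∈ closure C, 0 ≤ A.α i pC * A.α i y := by
          have hsub : C ⊆ {y | 0 ≤ A.α i pC * A.α i y} := by
            intro y hy
            rw [hCcell] at hy
            exact (hy i trivial).le
          exact fun y hy => ((hclosed _).closure_subset_iff.mpr hsub) hy
        have hclC' : ∀ y ∈ closure C', 0 ≤ A.α i pC' * A.α i y := by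
          have hsub : C' ⊆ {y | 0 ≤ A.α i pC' * A.α i y} := by
            intro y hy
            rw [hC'cell] at hy
            exact (hy i trivial).le
          exact fun y hy => ((hclosed _).closure_subset_iff.mpr hsub) hy
        have hpC0 : A.α i pC ≠ 0 := hpCmem i trivial
        have hpC'0 : A.α i pC' ≠ 0 := hpC'mem i trivial
        have h1 : 0 < A.α i pC * A.α i p :=
          lt_of_le_of_ne (hclC p (closure_mono Set.inter_subset_left hpcl))
            (Ne.symm (mul_ne_zero hpC0 hp0))
        have h2 : 0 < A.α i pC' * A.α i p :=
          lt_of_le_of_ne (hclC' p (closure_mono Set.inter_subset_left hpcl2))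
            (Ne.symm (mul_ne_zero hpC'0 hp0))
        clear hpar
        nlinarith [mul_pos h1 h2, sq_nonneg (A.α i p)]
    have hpC'inC : pC' ∈ C := by
      rw [hCcell]; intro i _; exact hsign i
    have hCeqC' : C = C' := by
      have hg := hpC'.1
      rw [hCdef'] at hg
      have hg2 := hpC'inC
      rw [hCdef] at hg2
      rw [hCdef, hCdef', connectedComponentIn_eq hg2, connectedComponentIn_eq hg]
    exact hne hCeqC'
  refine ⟨hdisj, ?_⟩
  -- Goal 2
  rw [Set.eq_empty_iff_forall_notMem]
  rintro z ⟨⟨hv, hsep⟩, -, hsep'⟩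
  have hpCpar : pC ∈ A.compOn (parIdx A X) := by
    have h := hCCt hpC.1
    rw [hCtdef] at h
    exact connectedComponentIn_subset _ _ h
  have hsign : ∀ i ∈ parIdx A X, 0 < A.α i pC * A.α i pC' := by
    intro i hi
    have hlin : (A.α i).linear (Arrangement.imP z) = 0 := hi hv
    have hns : ∀ w ∈ segment ℝ pC (Arrangement.reP z), A.α i w ≠ 0 :=
      fun w hw h0 => hsep i ⟨w, hw, h0⟩ hlin
    have hns' : ∀ w ∈ segment ℝ pC' (Arrangement.reP z), A.α i w ≠ 0 :=
      fun w hw h0 => hsep' i ⟨w, hw, h0⟩ hlin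
    have h1 : 0 < A.α i pC * A.α i (Arrangement.reP z) :=
      sign_const (convex_segment (𝕜 := ℝ) pC (Arrangement.reP z)).isPreconnected
        (A.α i) hns (left_mem_segment ℝ pC (Arrangement.reP z))
        (right_mem_segment ℝ pC (Arrangement.reP z))
    have h2 : 0 < A.α i pC' * A.α i (Arrangement.reP z) :=
      sign_const (convex_segment (𝕜 := ℝ) pC' (Arrangement.reP z)).isPreconnected
        (A.α i) hns' (left_mem_segment ℝ pC' (Arrangement.reP z))
        (right_mem_segment ℝ pC' (Arrangement.reP z))
    nlinarith [mul_pos h1 h2, sq_nonneg (A.α i (Arrangement.reP z))]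
  have hCtcell : Ct = {y | ∀ i ∈ parIdx A X, 0 < A.α i pC * A.α i y} := by
    have h := hCCt hpC.1
    rw [hCtdef] at h
    rw [hCtdef, connectedComponentIn_eq h, cell_eq A _ hpCpar]
  have hmem : pC' ∈ Ct := by rw [hCtcell]; exact hsign
  have hmem' : pC' ∈ Ct' := hCCt' hpC'.1
  have hfin : pC' ∈ Ct ∩ Ct' := ⟨hmem, hmem'⟩
  rw [hdisj] at hfin
  exact hfin

end IY
end

section
/- The complexified complement M(A) is the disjoint union of the sets S(C) over all chambers C: the sets S(C), C ∈ ch(A), are pairwise disjoint, and M(A) = ⋃_{C ∈ ch(A)} S(C). -/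
open Set

/-!
Write `z = x + iv`, let `s` be the set of hyperplanes parallel to `v` and `D` the chamber of `s`
containing `x`; `z ∈ M(A)` says exactly that `x` lies off the hyperplanes of `s`. A hyperplane
misses the segment `[p_C, x]` iff `p_C` and `x` lie strictly on one side of it, so `z ∈ S(C)` iff
`C ⊆ D` and `v ∈ τ(X_C)`: the theorem says that `D` contains exactly one chamber `C` with
`v ∈ τ(X_C)`.

If `C ⊆ D` and `v ∈ τ(X_C)`, genericity makes every hyperplane through the minimum point `p` of `C`
contain `X_C`, hence belong to `s`; so near `p` the chamber `C` fills `D`, and by convexity `p`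
minimises `h_q` on all of `D ∩ F^q`. Two such chambers therefore have the same level (at a lower
level `q < q'` the first minimum point would lie in `F^{q'-1}`, where `h_{q'}` vanishes, while
condition (1) makes `h_{q'}` positive at the second one) and the same minimum value, so
condition (2) forces `X_C = X_C'`; then they share `p` and coincide.

For existence take the lowest level `q` met by `D` and, among the finitely many chambers of `D`
at that level, one whose minimum value is least; by density of generic points its minimum point
`p` minimises `h_q` on `D ∩ F^q`. The hyperplanes of `s` through `p` cut out some `Y ⊇ X_C`. If
`dim Y > ℓ - q`, then `Y` meets `F^{q-1}`, where `h_q = 0`, and moving from `p` towards such a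
point lowers `h_q` without leaving `D ∩ F^q`. Hence `τ(X_C) = τ(Y) ∋ v`.
-/

namespace IY

open Arrangement Filter Topology

variable {ℓ n : ℕ}

theorem mul_pos_of_mul_pos_of_mul_pos {R : Type*} [CommRing R] [LinearOrder R]
    [IsStrictOrderedRing R] {a b c : R} (hab : 0 < a * b) (hac : 0 < a * c) : 0 < b * c := by
  have : 0 < a * a * (b * c) := by nlinarith [mul_pos hab hac]
  exact pos_of_mul_pos_right this (mul_self_nonneg a)

section AffineFunctional

variable {E : Type*} [AddCommGroup E] [Module ℝ E] (f : E →ᵃ[ℝ] ℝ)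

theorem AffineMap.linear_sub (x y : E) : f.linear (x - y) = f x - f y :=
  f.linearMap_vsub x y

theorem AffineMap.apply_lineMap_real (x y : E) (t : ℝ) :
    f (AffineMap.lineMap x y t) = f x + t * (f y - f x) := by
  rw [AffineMap.apply_lineMap, AffineMap.lineMap_apply_ring']
  ring

end AffineFunctional

namespace Arrangement

variable (A : Arrangement ℓ n) {s : Set (Fin n)} {x y p : Fin ℓ → ℝ}

/-- The chamber of the subarrangement `s` containing `x` when `x ∈ A.compOn s`, and `∅`
otherwise. -/
def sameSide (s : Set (Fin n)) (x : Fin ℓ → ℝ) : Set (Fin ℓ → ℝ) :=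
  {y | ∀ i ∈ s, 0 < A.α i x * A.α i y}

variable {A}

theorem self_mem_sameSide (hx : x ∈ A.compOn s) : x ∈ A.sameSide s x :=
  fun i hi => mul_self_pos.2 (hx i hi)

theorem mem_sameSide_comm : y ∈ A.sameSide s x ↔ x ∈ A.sameSide s y := by
  simp only [sameSide, mem_ofPred_eq, mul_comm]

theorem sameSide_subset_compOn : A.sameSide s x ⊆ A.compOn s :=
  fun _ hy i hi h0 => (hy i hi).ne' (by rw [h0, mul_zero])

theorem sameSide_subset_sameSide {t : Set (Fin n)} (hst : s ⊆ t) (hy : y ∈ A.sameSide s x) :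
    A.sameSide t y ⊆ A.sameSide s x :=
  fun _ hz i hi => mul_pos_of_mul_pos_of_mul_pos (by rw [mul_comm]; exact hy i hi) (hz i (hst hi))

theorem convex_sameSide : Convex ℝ (A.sameSide s x) := by
  intro y hy z hz a b ha hb hab i hi
  rw [Convex.combo_affine_apply hab, smul_eq_mul, smul_eq_mul, mul_add, mul_left_comm,
    mul_left_comm (A.α i x) b]
  rcases ha.eq_or_lt with rfl | ha
  · rw [zero_add] at hab
    subst hab
    simpa using hz i hi
  · exact add_pos_of_pos_of_nonneg (mul_pos ha (hy i hi)) (mul_nonneg hb (hz i hi).le)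

theorem isOpen_sameSide : IsOpen (A.sameSide s x) := by
  have : A.sameSide s x = ⋂ i ∈ s, {y | 0 < A.α i x * A.α i y} := by ext; simp [sameSide]
  exact this ▸ s.toFinite.isOpen_biInter fun i _ =>
    isOpen_lt continuous_const (continuous_const.mul (A.α i).continuous_of_finiteDimensional)

theorem mul_nonneg_of_mem_closure_sameSide (hp : p ∈ closure (A.sameSide s x)) {i : Fin n}
    (hi : i ∈ s) : 0 ≤ A.α i x * A.α i p :=
  closure_minimal (fun _ hy => (hy i hi).le) (isClosed_le continuous_const
    (continuous_const.mul (A.α i).continuous_of_finiteDimensional)) hp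

theorem eventually_lineMap_mem_sameSide {m : Fin ℓ → ℝ}
    (hp : ∀ i ∈ s, A.α i p ≠ 0 → 0 < A.α i x * A.α i p)
    (hm : ∀ i ∈ s, A.α i p = 0 → 0 < A.α i x * A.α i m) :
    ∀ᶠ θ in 𝓝[>] (0 : ℝ), AffineMap.lineMap p m θ ∈ A.sameSide s x := by
  refine eventually_all.2 fun i => ?_
  by_cases hi : i ∈ s
  swap
  · exact Eventually.of_forall fun _ h => absurd h hi
  by_cases hpi : A.α i p = 0
  · filter_upwards [self_mem_nhdsWithin] with θ (hθ : 0 < θ) _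
    rw [AffineMap.apply_lineMap_real, hpi]
    nlinarith [hm i hi hpi]
  · have hc : Continuous fun θ : ℝ => A.α i x * A.α i (AffineMap.lineMap p m θ) :=
      continuous_const.mul
        ((A.α i).continuous_of_finiteDimensional.comp AffineMap.lineMap_continuous)
    filter_upwards [nhdsWithin_le_nhds <| continuousAt_const.eventually_lt hc.continuousAt
      (by simpa using hp i hi hpi)] with θ hθ _ using hθ

theorem connectedComponentIn_compOn (hx : x ∈ A.compOn s) :
    connectedComponentIn (A.compOn s) x = A.sameSide s x := by
  set R := ⋃ i ∈ s, {y | A.α i x * A.α i y < 0}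
  have hR : IsOpen R := isOpen_biUnion fun i _ =>
    isOpen_lt (continuous_const.mul (A.α i).continuous_of_finiteDimensional) continuous_const
  have hdisj : Disjoint (A.sameSide s x) R := by
    simp only [R, disjoint_iUnion_right]
    exact fun i hi => disjoint_left.2 fun y hy => (hy i hi).not_gt
  have hcover : connectedComponentIn (A.compOn s) x ⊆ A.sameSide s x ∪ R := by
    intro y hy
    by_contra hyR
    simp only [sameSide, R, mem_union, mem_ofPred_eq, mem_iUnion, not_or, not_forall, not_exists,
      not_lt] at hyR
    obtain ⟨⟨i, hi, hle⟩, hge⟩ := hyR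
    exact mul_ne_zero (hx i hi) (connectedComponentIn_subset _ _ hy i hi)
      (le_antisymm hle (hge i hi))
  exact (isPreconnected_connectedComponentIn.subset_left_of_subset_union isOpen_sameSide hR hdisj
    hcover ⟨x, mem_connectedComponentIn hx, self_mem_sameSide hx⟩).antisymm
    (convex_sameSide.isPreconnected.subset_connectedComponentIn (self_mem_sameSide hx)
      sameSide_subset_compOn)

theorem IsChamber.eq_sameSide {C : Set (Fin ℓ → ℝ)} (hC : A.IsChamber C) (hp : p ∈ C) :
    C = A.sameSide univ p := by
  obtain ⟨x, hx, rfl⟩ := hC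
  rw [connectedComponentIn_compOn hx] at hp ⊢
  exact (sameSide_subset_sameSide le_rfl (mem_sameSide_comm.1 hp)).antisymm
    (sameSide_subset_sameSide le_rfl hp)

theorem isChamber_sameSide (hx : x ∈ A.compOn univ) : A.IsChamber (A.sameSide univ x) :=
  ⟨x, hx, (connectedComponentIn_compOn hx).symm⟩

theorem IsChamber.nonempty {C : Set (Fin ℓ → ℝ)} (hC : A.IsChamber C) : C.Nonempty := by
  obtain ⟨x, hx, rfl⟩ := hC
  exact ⟨x, mem_connectedComponentIn hx⟩

theorem IsChamber.subset_sameSide_iff {C : Set (Fin ℓ → ℝ)} (hC : A.IsChamber C) (hp : p ∈ C) :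
    C ⊆ A.sameSide s x ↔ p ∈ A.sameSide s x := by
  refine ⟨fun h => h hp, fun h => ?_⟩
  rw [hC.eq_sameSide hp]
  exact sameSide_subset_sameSide (subset_univ s) h

theorem IsChamber.subset_of_convex {C K : Set (Fin ℓ → ℝ)} (hC : A.IsChamber C)
    (hK : Convex ℝ K) (hKA : K ⊆ A.compOn univ) (hy : y ∈ K) (hyC : y ∈ C) : K ⊆ C := by
  rw [hC.eq_sameSide hyC, ← connectedComponentIn_compOn (hKA hy)]
  exact hK.isPreconnected.subset_connectedComponentIn hy hKA

theorem IsChamber.eventually_mem {C : Set (Fin ℓ → ℝ)} (hC : A.IsChamber C)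
    (hCD : C ⊆ A.sameSide s x) (hpC : p ∈ closure C) (hs : ∀ i, A.α i p = 0 → i ∈ s) :
    ∀ᶠ y in 𝓝 p, y ∈ A.sameSide s x → y ∈ C := by
  set U := A.sameSide {i | A.α i p ≠ 0} p
  have hU : U ∈ 𝓝 p := isOpen_sameSide.mem_nhds (self_mem_sameSide fun _ hi => hi)
  obtain ⟨y₀, hy₀U, hy₀C⟩ := mem_closure_iff_nhds.1 hpC U hU
  have hUA : U ∩ A.sameSide s x ⊆ A.compOn univ := by
    rintro y ⟨hyU, hyD⟩ i -
    by_cases hpi : A.α i p = 0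
    · exact sameSide_subset_compOn hyD i (hs i hpi)
    · exact sameSide_subset_compOn hyU i hpi
  have hK := hC.subset_of_convex (convex_sameSide.inter convex_sameSide) hUA
    ⟨hy₀U, hCD hy₀C⟩ hy₀C
  filter_upwards [hU] with y hyU hyD using hK ⟨hyU, hyD⟩

variable (A) in
theorem finite_setOf_isChamber : {C | A.IsChamber C}.Finite := by
  refine (finite_range fun ε : Fin n → Bool =>
    {y : Fin ℓ → ℝ | ∀ i, 0 < (if ε i then (1 : ℝ) else -1) * A.α i y}).subset ?_
  rintro C ⟨x, hx, rfl⟩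
  refine ⟨fun i => decide (0 < A.α i x), ?_⟩
  rw [connectedComponentIn_compOn hx]
  ext y
  refine forall_congr' fun i => ?_
  have hxi := hx i trivial
  by_cases h : 0 < A.α i x
  · simp only [h, decide_true, if_true, mem_univ, forall_const]
    constructor <;> intro hy <;> nlinarith
  · have h' : A.α i x < 0 := lt_of_le_of_ne (not_lt.1 h) hxi
    simp only [h, decide_false, Bool.false_eq_true, if_false, mem_univ, forall_const]
    constructor <;> intro hy <;> nlinarith

end Arrangement

variable {A : Arrangement ℓ n} {𝓕 : Flag ℓ} {q : ℕ} {s : Set (Fin n)} {C X : Set (Fin ℓ → ℝ)}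
  {p ps v x y y₀ : Fin ℓ → ℝ} {i : Fin n}

theorem not_sepPt_iff : ¬ SepPt A p x i ↔ 0 < A.α i p * A.α i x := by
  have : SepPt A p x i ↔ (0 : ℝ) ∈ segment ℝ (A.α i p) (A.α i x) := by
    rw [← image_segment]
    rfl
  rw [this, segment_eq_uIcc, mem_uIcc]
  constructor
  · intro h
    push Not at h
    rcases le_or_gt (A.α i p) 0 with hp | hp
    · exact mul_pos_of_neg_of_neg (h.2 (h.1 hp).le) (h.1 hp)
    · exact mul_pos hp (lt_of_not_ge fun hx => (h.2 hx).not_gt hp)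
  · rintro h (⟨hp, hx⟩ | ⟨hx, hp⟩) <;> nlinarith

theorem mem_S_iff {T : Submodule ℝ (Fin ℓ → ℝ)} {z : Fin ℓ → ℂ} :
    z ∈ S A T p ↔ imP z ∈ T ∧ reP z ∈ A.sameSide {i | (A.α i).linear (imP z) = 0} p := by
  simp only [S, sameSide, mem_ofPred_eq, ← not_sepPt_iff]
  exact and_congr_right' (forall_congr' fun i => by tauto)

theorem mem_M_iff {z : Fin ℓ → ℂ} :
    z ∈ A.M ↔ reP z ∈ A.compOn {i | (A.α i).linear (imP z) = 0} := by
  simp only [M, compOn, mem_ofPred_eq]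
  exact forall_congr' fun i => by tauto

theorem tau_mono {X Y : Set (Fin ℓ → ℝ)} (h : X ⊆ Y) : tau X ≤ tau Y :=
  AffineSubspace.direction_le (affineSpan_mono ℝ h)

theorem dimS_mono {X Y : Set (Fin ℓ → ℝ)} (h : X ⊆ Y) : dimS X ≤ dimS Y :=
  Submodule.finrank_mono (tau_mono h)

theorem tau_univ : tau (univ : Set (Fin ℓ → ℝ)) = ⊤ := by
  rw [tau, AffineSubspace.span_univ, AffineSubspace.direction_top]

theorem dimS_univ : dimS (univ : Set (Fin ℓ → ℝ)) = ℓ := by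
  rw [dimS, ← tau, tau_univ, finrank_top, Module.finrank_fin_fun]

theorem biInter_H_eq_mk' {t : Set (Fin n)} (hp : p ∈ ⋂ i ∈ t, A.H i) :
    ⋂ i ∈ t, A.H i = AffineSubspace.mk' p (⨅ i ∈ t, LinearMap.ker (A.α i).linear) := by
  simp only [mem_iInter₂, H, mem_ofPred_eq] at hp
  ext y
  simp only [mem_iInter₂, H, mem_ofPred_eq, SetLike.mem_coe, AffineSubspace.mem_mk', vsub_eq_sub,
    Submodule.mem_iInf, LinearMap.mem_ker, AffineMap.linear_sub]
  exact forall₂_congr fun i hi => by rw [hp i hi, sub_zero]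

theorem tau_biInter_H {t : Set (Fin n)} (hp : p ∈ ⋂ i ∈ t, A.H i) :
    tau (⋂ i ∈ t, A.H i) = ⨅ i ∈ t, LinearMap.ker (A.α i).linear := by
  rw [tau, biInter_H_eq_mk' hp, AffineSubspace.affineSpan_coe, AffineSubspace.direction_mk']

theorem L_univ (A : Arrangement ℓ n) : A.L univ :=
  ⟨univ_nonempty, ∅, empty_subset _, by simp⟩

theorem L_H (A : Arrangement ℓ n) (i : Fin n) : A.L (A.H i) := by
  obtain ⟨p, hp⟩ :=
    (A.α i).linear_surjective_iff.1 (LinearMap.surjective_iff_ne_zero.2 (A.nonzero i)) 0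
  exact ⟨⟨p, hp⟩, {i}, subset_univ _, by simp⟩

theorem dimS_H (A : Arrangement ℓ n) (i : Fin n) : dimS (A.H i) + 1 = ℓ := by
  obtain ⟨p, hp⟩ := (L_H A i).1
  have hH : A.H i = ⋂ j ∈ ({i} : Set (Fin n)), A.H j := by simp
  rw [dimS, ← tau, hH, tau_biInter_H (hH ▸ hp), iInf_singleton,
    Module.Dual.finrank_ker_add_one_of_ne_zero (A.nonzero i), Module.finrank_fin_fun]

namespace Arrangement.L

theorem mem_iff_sub_mem_tau (hX : A.L X) (hp : p ∈ X) : y ∈ X ↔ y - p ∈ tau X := by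
  obtain ⟨-, t, -, rfl⟩ := hX
  rw [tau_biInter_H hp, biInter_H_eq_mk' hp]
  exact AffineSubspace.mem_mk'

theorem subset_H_iff (hX : A.L X) (hp : p ∈ X) :
    X ⊆ A.H i ↔ A.α i p = 0 ∧ tau X ≤ LinearMap.ker (A.α i).linear := by
  refine ⟨fun h => ⟨h hp, fun u hu => ?_⟩, fun ⟨hpi, hker⟩ y hy => ?_⟩
  · have hpu : p + u ∈ X := (hX.mem_iff_sub_mem_tau hp).2 (by rwa [add_sub_cancel_left])
    have := AffineMap.linear_sub (A.α i) (p + u) p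
    rw [add_sub_cancel_left, h hpu, h hp, sub_zero] at this
    exact this
  · have := AffineMap.linear_sub (A.α i) y p
    rw [hker ((hX.mem_iff_sub_mem_tau hp).1 hy), hpi, sub_zero] at this
    exact this.symm

theorem inter_H (hX : A.L X) (hne : (X ∩ A.H i).Nonempty) : A.L (X ∩ A.H i) := by
  obtain ⟨-, t, -, rfl⟩ := hX
  exact ⟨hne, insert i t, subset_univ _, by rw [biInter_insert, inter_comm]⟩

theorem dimS_inter_H_lt (hX : A.L X) (hp : p ∈ X ∩ A.H i) (hXH : ¬ X ⊆ A.H i) :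
    dimS (X ∩ A.H i) < dimS X := by
  refine Submodule.finrank_lt_finrank_of_lt ((tau_mono inter_subset_left).lt_of_ne fun h => hXH ?_)
  exact (hX.subset_H_iff hp.1).2 ⟨hp.2, h ▸ ((hX.inter_H ⟨p, hp⟩).subset_H_iff hp).1
    inter_subset_right |>.2⟩

theorem eq_univ_of_dimS (hX : A.L X) (hd : dimS X = ℓ) : X = univ := by
  obtain ⟨p, hp⟩ := hX.1
  have htop : tau X = ⊤ :=
    Submodule.eq_top_of_finrank_eq (hd.trans (Module.finrank_fin_fun ℝ).symm)
  ext y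
  simp [hX.mem_iff_sub_mem_tau hp, htop]

end Arrangement.L

namespace Flag

theorem F_mono {q q' : ℕ} (h : q ≤ q') : 𝓕.F q ⊆ 𝓕.F q' :=
  fun _ hx j hj => hx j (h.trans hj)

theorem F_eq_univ (h : ℓ ≤ q) : 𝓕.F q = univ :=
  eq_univ_of_forall fun _ j hj => absurd (j.isLt.trans_le (h.trans hj)) (lt_irrefl _)

theorem mem_F_pred_iff (hq1 : 1 ≤ q) (hql : q ≤ ℓ) :
    x ∈ 𝓕.F (q - 1) ↔ x ∈ 𝓕.F q ∧ 𝓕.hq q x = 0 := by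
  rw [Flag.hq, dif_pos (by omega)]
  refine ⟨fun hx => ⟨F_mono (Nat.sub_le q 1) hx, hx _ le_rfl⟩, fun ⟨hx, h0⟩ j hj => ?_⟩
  rcases hj.lt_or_eq with hj | hj
  · exact hx j (by omega)
  · exact (Fin.ext hj.symm : j = ⟨q - 1, _⟩) ▸ h0

theorem convex_F (q : ℕ) : Convex ℝ (𝓕.F q) := by
  intro x hx y hy a b _ _ hab j hj
  rw [Convex.combo_affine_apply hab, hx j hj, hy j hj, smul_zero, smul_zero, add_zero]

end Flag

namespace ChF

theorem le_of_nonempty {q' : ℕ} (h : ChF A 𝓕 q C) (h' : (C ∩ 𝓕.F q').Nonempty) : q ≤ q' := by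
  by_contra hlt
  rcases h.2.2 with rfl | hemp
  · exact hlt (Nat.zero_le _)
  · exact (hemp ▸ h'.mono (inter_subset_inter_right C (Flag.F_mono (by omega)))).ne_empty rfl

theorem eq {q' : ℕ} (h : ChF A 𝓕 q C) (h' : ChF A 𝓕 q' C) : q = q' :=
  (h.le_of_nonempty h'.2.1).antisymm (h'.le_of_nonempty h.2.1)

theorem le_ell (h : ChF A 𝓕 q C) : q ≤ ℓ :=
  h.le_of_nonempty (by rw [Flag.F_eq_univ le_rfl, inter_univ]; exact h.1.nonempty)

theorem inter_F_pred (h : ChF A 𝓕 q C) (hq1 : 1 ≤ q) : C ∩ 𝓕.F (q - 1) = ∅ :=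
  h.2.2.resolve_left (by omega)

end ChF

/-- Local minima of affine functions on convex sets are global. -/
theorem le_of_mem_closure_of_eventually {E : Type*} [AddCommGroup E] [TopologicalSpace E]
    [Module ℝ E] [IsTopologicalAddGroup E] [ContinuousSMul ℝ E] {C D F : Set E} {f : E →ᵃ[ℝ] ℝ}
    {p : E} (hD : Convex ℝ D) (hF : Convex ℝ F) (hCD : C ⊆ D)
    (hloc : ∀ᶠ y in 𝓝 p, y ∈ D → y ∈ C) (hp : p ∈ closure (C ∩ F))
    (hmin : ∀ y ∈ closure (C ∩ F), f p ≤ f y) : ∀ y ∈ closure (D ∩ F), f p ≤ f y := by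
  have hlocal : IsLocalMinOn f (closure (D ∩ F)) p := by
    obtain ⟨U, hUC, hU, hpU⟩ := mem_nhds_iff.1 hloc
    filter_upwards [inter_mem_nhdsWithin _ (hU.mem_nhds hpU)] with y ⟨hyK, hyU⟩
    refine hmin y (closure_mono ?_ (hU.inter_closure ⟨hyU, hyK⟩))
    exact fun z ⟨hzU, hzD, hzF⟩ => ⟨hUC hzU hzD, hzF⟩
  have hconv : ConvexOn ℝ (closure (D ∩ F)) f :=
    ((convexOn_id convex_univ).comp_affineMap f).subset (subset_univ _) (hD.inter hF).closure
  exact isMinOn_iff.1 <| IsMinOn.of_isLocalMinOn_of_convexOn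
    (closure_mono (inter_subset_inter_left F hCD) hp) hlocal hconv

theorem exists_mem_sameSide_inter_F_lt (hq1 : 1 ≤ q) (hql : q ≤ ℓ) {z : Fin ℓ → ℝ}
    (hps : ps ∈ 𝓕.F q) (hpos : 0 < 𝓕.hq q ps)
    (hsign : ∀ i ∈ s, A.α i ps ≠ 0 → 0 < A.α i x * A.α i ps)
    (hz : z ∈ 𝓕.F (q - 1)) (hzH : ∀ i ∈ s, A.α i ps = 0 → A.α i z = 0)
    (hy₀ : y₀ ∈ A.sameSide s x ∩ 𝓕.F q) :
    ∃ r ∈ A.sameSide s x ∩ 𝓕.F q, 𝓕.hq q r < 𝓕.hq q ps := by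
  have hz0 : 𝓕.hq q z = 0 := ((Flag.mem_F_pred_iff hq1 hql).1 hz).2
  have hzF : z ∈ 𝓕.F q := Flag.F_mono (Nat.sub_le q 1) hz
  -- `m` is a point of `F^q` below the level of `ps`, strictly on the side of `x` of every
  -- hyperplane of `s` through `ps`; moving from `ps` slightly towards `m` stays in the chamber.
  have hsmall : ∀ᶠ κ in 𝓝[>] (0 : ℝ), κ * 𝓕.hq q y₀ < 𝓕.hq q ps := nhdsWithin_le_nhds <|
    (continuous_id.mul continuous_const).continuousAt.eventually_lt continuousAt_const
      (by simpa using hpos)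
  obtain ⟨κ, hκlt, hκ⟩ := (hsmall.and (Ioo_mem_nhdsGT zero_lt_one)).exists
  set m := AffineMap.lineMap z y₀ κ
  have hmF : m ∈ 𝓕.F q := (Flag.convex_F q).lineMap_mem hzF hy₀.2 (Ioo_subset_Icc_self hκ)
  have hmlt : 𝓕.hq q m < 𝓕.hq q ps := by
    rw [AffineMap.apply_lineMap_real, hz0]
    linarith
  have hm : ∀ i ∈ s, A.α i ps = 0 → 0 < A.α i x * A.α i m := fun i hi hpi => by
    rw [AffineMap.apply_lineMap_real, hzH i hi hpi]
    nlinarith [hy₀.1 i hi, hκ.1]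
  obtain ⟨θ, hθD, hθ⟩ :=
    ((eventually_lineMap_mem_sameSide hsign hm).and (Ioo_mem_nhdsGT zero_lt_one)).exists
  refine ⟨_, ⟨hθD, (Flag.convex_F q).lineMap_mem hps hmF (Ioo_subset_Icc_self hθ)⟩, ?_⟩
  rw [AffineMap.apply_lineMap_real]
  nlinarith [hθ.1]

namespace GenericFlag

theorem inter_eq_empty (hgen : GenericFlag A 𝓕) (hX : A.L X) (hq : q ≤ ℓ)
    (h : q + dimS X < ℓ) : 𝓕.F q ∩ X = ∅ :=
  (hgen X hX q hq).2 h

theorem inter_nonempty (hgen : GenericFlag A 𝓕) (hX : A.L X) (hq : q ≤ ℓ)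
    (h : ℓ ≤ q + dimS X) : (𝓕.F q ∩ X).Nonempty := by
  obtain ⟨W, hW, hWX, -⟩ := (hgen X hX q hq).1 h
  exact hWX ▸ hW

theorem exists_mem_F_ne_zero (hgen : GenericFlag A 𝓕) (hq : q ≤ ℓ) (j : Fin n) :
    ∃ w ∈ 𝓕.F q, A.α j w ≠ 0 := by
  by_contra! hF
  have hFH : 𝓕.F q ∩ A.H j = 𝓕.F q ∩ univ := by
    rw [inter_univ, inter_eq_left]
    exact hF
  have hH := dimS_H A j
  rcases lt_or_ge (q + dimS (A.H j)) ℓ with hlt | hge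
  · have hne := hgen.inter_nonempty (L_univ A) hq (by rw [dimS_univ]; omega)
    rw [← hFH, hgen.inter_eq_empty (L_H A j) hq hlt] at hne
    exact not_nonempty_empty hne
  · obtain ⟨W, -, hW, hWd⟩ := (hgen _ (L_H A j) q hq).1 hge
    obtain ⟨W', -, hW', hW'd⟩ := (hgen _ (L_univ A) q hq).1 (by rw [dimS_univ]; omega)
    rw [hFH, ← hW'] at hW
    rw [SetLike.coe_injective hW, hW'd, dimS_univ] at hWd
    omega

theorem subset_H_of_mem (hgen : GenericFlag A 𝓕) (hX : A.L X) (hXd : dimS X + q = ℓ)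
    (hpX : p ∈ X) (hpF : p ∈ 𝓕.F q) (hpi : A.α i p = 0) : X ⊆ A.H i := by
  by_contra hXH
  have hlt := hX.dimS_inter_H_lt ⟨hpX, hpi⟩ hXH
  have hemp := hgen.inter_eq_empty (q := q) (hX.inter_H ⟨p, hpX, hpi⟩) (by omega) (by omega)
  exact hemp.subset ⟨hpF, hpX, hpi⟩

theorem exists_mem_inter_compOn (hgen : GenericFlag A 𝓕) (hq : q ≤ ℓ) {U : Set (Fin ℓ → ℝ)}
    (hU : IsOpen U) (hne : (U ∩ 𝓕.F q).Nonempty) : ∃ y ∈ U ∩ 𝓕.F q, y ∈ A.compOn univ := by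
  suffices ∀ t : Finset (Fin n), ∃ y ∈ U ∩ 𝓕.F q, y ∈ A.compOn t by
    simpa using this Finset.univ
  intro t
  induction t using Finset.induction_on with
  | empty => exact ⟨hne.some, hne.some_mem, by simp [compOn]⟩
  | insert j t _ ih =>
    obtain ⟨y, hy, hyt⟩ := ih
    by_cases hj : A.α j y ≠ 0
    · exact ⟨y, hy, by simpa [compOn, hj] using hyt⟩
    obtain ⟨w, hwF, hwj⟩ := hgen.exists_mem_F_ne_zero hq j
    have hc : Continuous fun θ : ℝ => AffineMap.lineMap y w θ := AffineMap.lineMap_continuous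
    have hU' : ∀ᶠ θ in 𝓝[>] (0 : ℝ), AffineMap.lineMap y w θ ∈ U := nhdsWithin_le_nhds <|
      hc.continuousAt.preimage_mem_nhds (by simpa using hU.mem_nhds hy.1)
    have ht : ∀ᶠ θ in 𝓝[>] (0 : ℝ), ∀ i ∈ t, A.α i (AffineMap.lineMap y w θ) ≠ 0 :=
      (eventually_all_finset t).2 fun i hi => nhdsWithin_le_nhds <|
        ((A.α i).continuous_of_finiteDimensional.comp hc).continuousAt.eventually_ne
          (by simpa using hyt i hi)
    obtain ⟨θ, hθU, hθt, hθ⟩ := (hU'.and (ht.and (Ioo_mem_nhdsGT zero_lt_one))).exists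
    refine ⟨AffineMap.lineMap y w θ, ⟨hθU, (Flag.convex_F q).lineMap_mem hy.2 hwF
      (Ioo_subset_Icc_self hθ)⟩, ?_⟩
    simp only [compOn, Finset.coe_insert, mem_insert_iff, forall_eq_or_imp]
    refine ⟨?_, hθt⟩
    rw [AffineMap.apply_lineMap_real, not_not.1 hj]
    simpa using ⟨hθ.1.ne', hwj⟩

theorem hq_pos (hgen : GenericFlag A 𝓕) (h1 : Cond1On A univ 𝓕) (hC : ChF A 𝓕 q C)
    (hq1 : 1 ≤ q) (hX : A.L X) (hXd : dimS X = ℓ - q) (hpX : p ∈ X ∩ 𝓕.F q)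
    (hpC : p ∈ closure (C ∩ 𝓕.F q)) : 0 < 𝓕.hq q p := by
  have hql := hC.le_ell
  have hnonneg : 0 ≤ 𝓕.hq q p :=
    closure_minimal (fun y hy => (h1 q hq1 hql C hC.1 hC.2.1 (hC.inter_F_pred hq1) y hy).le)
      (isClosed_le continuous_const (𝓕.hq q).continuous_of_finiteDimensional) hpC
  refine hnonneg.lt_of_ne fun h0 => ?_
  have hemp := hgen.inter_eq_empty (q := q - 1) hX (by omega) (by omega)
  exact hemp.subset ⟨(Flag.mem_F_pred_iff hq1 hql).2 ⟨hpX.2, h0.symm⟩, hpX.1⟩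

theorem eventually_mem_chamber (hgen : GenericFlag A 𝓕) (hC : A.IsChamber C)
    (hCD : C ⊆ A.sameSide {i | (A.α i).linear v = 0} x) (hX : A.L X) (hXd : dimS X + q = ℓ)
    (hpX : p ∈ X ∩ 𝓕.F q) (hpC : p ∈ closure (C ∩ 𝓕.F q)) (hv : v ∈ tau X) :
    ∀ᶠ y in 𝓝 p, y ∈ A.sameSide {i | (A.α i).linear v = 0} x → y ∈ C :=
  hC.eventually_mem hCD (closure_mono inter_subset_left hpC) fun _ hpi =>
    ((hX.subset_H_iff hpX.1).1 (hgen.subset_H_of_mem hX hXd hpX.1 hpX.2 hpi)).2 hv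

theorem eq_of_subset_sameSide (hgen : GenericFlag A 𝓕) (h1 : Cond1On A univ 𝓕)
    (h2 : Cond2On A univ 𝓕) {C' X' : Set (Fin ℓ → ℝ)} {q' : ℕ}
    (hC : ChF A 𝓕 q C) (hX : IsXC A 𝓕 q C X) (hv : v ∈ tau X)
    (hCD : C ⊆ A.sameSide {i | (A.α i).linear v = 0} x)
    (hC' : ChF A 𝓕 q' C') (hX' : IsXC A 𝓕 q' C' X') (hv' : v ∈ tau X')
    (hC'D : C' ⊆ A.sameSide {i | (A.α i).linear v = 0} x) : C = C' := by
  wlog hqq : q ≤ q' generalizing q q' C C' X X'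
  · exact (this hC' hX' hv' hC'D hC hX hv hCD (le_of_not_ge hqq)).symm
  obtain ⟨hXL, hXd, p, hXp, hpC, hmin⟩ := hX
  obtain ⟨hXL', hXd', p', hXp', hp'C, hmin'⟩ := hX'
  have hpX : p ∈ X ∩ 𝓕.F q := hXp ▸ rfl
  have hp'X : p' ∈ X' ∩ 𝓕.F q' := hXp' ▸ rfl
  have hloc := hgen.eventually_mem_chamber hC.1 hCD hXL (by have := hC.le_ell; omega) hpX hpC hv
  have hloc' :=
    hgen.eventually_mem_chamber hC'.1 hC'D hXL' (by have := hC'.le_ell; omega) hp'X hp'C hv'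
  have hlow := le_of_mem_closure_of_eventually convex_sameSide (Flag.convex_F q) hCD hloc hpC hmin
  have hlow' :=
    le_of_mem_closure_of_eventually convex_sameSide (Flag.convex_F q') hC'D hloc' hp'C hmin'
  rcases hqq.lt_or_eq with hlt | rfl
  · -- `h_{q'}` vanishes on `F^q ⊆ F^{q'-1}`, but is positive at `p'`.
    have hp0 : 𝓕.hq q' p = 0 :=
      ((Flag.mem_F_pred_iff (by omega) hC'.le_ell).1 (Flag.F_mono (by omega) hpX.2)).2
    have hle := hlow' p (closure_mono (inter_subset_inter hCD (Flag.F_mono hlt.le)) hpC)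
    have hpos := hgen.hq_pos h1 hC' (by omega) hXL' hXd' hp'X hp'C
    linarith
  by_cases hXX : X = X'
  · subst hXX
    obtain rfl : p = p' := singleton_eq_singleton_iff.1 (hXp.symm.trans hXp')
    obtain ⟨y, ⟨-, hy'⟩, hyC, -⟩ := mem_closure_iff_nhds.1 hpC _ (hloc.and hloc')
    exact (hC.1.eq_sameSide hyC).trans (hC'.1.eq_sameSide (hy' (hCD hyC))).symm
  · have hq1 : 1 ≤ q := by
      by_contra h0
      exact hXX ((hXL.eq_univ_of_dimS (by omega)).trans (hXL'.eq_univ_of_dimS (by omega)).symm)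
    exact absurd
      ((hlow p' (closure_mono (inter_subset_inter_left _ hC'D) hp'C)).antisymm
        (hlow' p (closure_mono (inter_subset_inter_left _ hCD) hpC)))
      (h2 q hq1 hC.le_ell X X' hXL hXL' hXd hXd' hXX p hpX p' hp'X)

theorem exists_chamber_forall_le (hgen : GenericFlag A 𝓕) (hql : q ≤ ℓ)
    (hne : (A.sameSide s x ∩ 𝓕.F q).Nonempty) (XC : Set (Fin ℓ → ℝ) → Set (Fin ℓ → ℝ))
    (hXC : ∀ C, A.IsChamber C → C ⊆ A.sameSide s x → (C ∩ 𝓕.F q).Nonempty →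
      IsXC A 𝓕 q C (XC C)) :
    ∃ C, A.IsChamber C ∧ C ⊆ A.sameSide s x ∧ ∃ p, XC C ∩ 𝓕.F q = {p} ∧
      p ∈ closure (C ∩ 𝓕.F q) ∧ ∀ y ∈ A.sameSide s x ∩ 𝓕.F q, 𝓕.hq q p ≤ 𝓕.hq q y := by
  set 𝒞 := {C | A.IsChamber C ∧ C ⊆ A.sameSide s x ∧ (C ∩ 𝓕.F q).Nonempty}
  have hgeneric : ∀ y ∈ A.sameSide s x ∩ 𝓕.F q, y ∈ A.compOn univ →
      A.sameSide univ y ∈ 𝒞 ∧ y ∈ A.sameSide univ y := fun y hy hyA =>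
    ⟨⟨isChamber_sameSide hyA, sameSide_subset_sameSide (subset_univ s) hy.1,
      ⟨y, self_mem_sameSide hyA, hy.2⟩⟩, self_mem_sameSide hyA⟩
  have h𝒞 : 𝒞.Nonempty := by
    obtain ⟨y, hy, hyA⟩ := hgen.exists_mem_inter_compOn hql isOpen_sameSide hne
    exact ⟨_, (hgeneric y hy hyA).1⟩
  choose! pt hpt using fun C (hC : C ∈ 𝒞) => (hXC C hC.1 hC.2.1 hC.2.2).2.2
  obtain ⟨C, hC, hCmin⟩ := 𝒞.exists_min_image (fun C => 𝓕.hq q (pt C))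
    ((finite_setOf_isChamber A).subset fun _ hC => hC.1) h𝒞
  refine ⟨C, hC.1, hC.2.1, pt C, (hpt C hC).1, (hpt C hC).2.1, fun y hy => ?_⟩
  -- Otherwise a generic point below the level of `pt C` lies in a chamber with a lower minimum.
  by_contra! hlt
  obtain ⟨y', ⟨⟨hy'D, hy'lt⟩, hy'F⟩, hy'A⟩ := hgen.exists_mem_inter_compOn hql
    (isOpen_sameSide.inter (isOpen_lt (𝓕.hq q).continuous_of_finiteDimensional continuous_const))
    ⟨y, ⟨hy.1, hlt⟩, hy.2⟩
  obtain ⟨hC', hy'C'⟩ := hgeneric y' ⟨hy'D, hy'F⟩ hy'A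
  exact ((hCmin _ hC').trans ((hpt _ hC').2.2 y' (subset_closure ⟨hy'C', hy'F⟩))).not_gt hy'lt

theorem dimS_add_le_of_forall_le (hgen : GenericFlag A 𝓕) (hq1 : 1 ≤ q) (hql : q ≤ ℓ)
    {Y : Set (Fin ℓ → ℝ)} (hY : A.L Y) (hYH : ∀ i ∈ s, A.α i ps = 0 → Y ⊆ A.H i)
    (hps : ps ∈ 𝓕.F q) (hpos : 0 < 𝓕.hq q ps)
    (hsign : ∀ i ∈ s, A.α i ps ≠ 0 → 0 < A.α i x * A.α i ps)
    (hy₀ : y₀ ∈ A.sameSide s x ∩ 𝓕.F q)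
    (hmin : ∀ y ∈ A.sameSide s x ∩ 𝓕.F q, 𝓕.hq q ps ≤ 𝓕.hq q y) : dimS Y + q ≤ ℓ := by
  by_contra! hlt
  obtain ⟨z, hzF, hzY⟩ := hgen.inter_nonempty (q := q - 1) hY (by omega) (by omega)
  obtain ⟨r, hr, hrlt⟩ := exists_mem_sameSide_inter_F_lt hq1 hql hps hpos hsign hzF
    (fun i hi hpi => hYH i hi hpi hzY) hy₀
  exact (hmin r hr).not_gt hrlt

theorem mem_tau_of_forall_le (hgen : GenericFlag A 𝓕) (hq1 : 1 ≤ q) (hql : q ≤ ℓ)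
    (hX : A.L X) (hXd : dimS X = ℓ - q) (hpsX : ps ∈ X ∩ 𝓕.F q) (hpos : 0 < 𝓕.hq q ps)
    (hsign : ∀ i ∈ {i | (A.α i).linear v = 0}, A.α i ps ≠ 0 → 0 < A.α i x * A.α i ps)
    (hy₀ : y₀ ∈ A.sameSide {i | (A.α i).linear v = 0} x ∩ 𝓕.F q)
    (hmin : ∀ y ∈ A.sameSide {i | (A.α i).linear v = 0} x ∩ 𝓕.F q, 𝓕.hq q ps ≤ 𝓕.hq q y) :
    v ∈ tau X := by
  set t := {i | (A.α i).linear v = 0 ∧ A.α i ps = 0}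
  have hpsY : ps ∈ ⋂ i ∈ t, A.H i := mem_iInter₂.2 fun _ hi => hi.2
  have hY : A.L (⋂ i ∈ t, A.H i) := ⟨⟨ps, hpsY⟩, t, subset_univ _, rfl⟩
  have hXY : X ⊆ ⋂ i ∈ t, A.H i :=
    subset_iInter₂ fun _ hi => hgen.subset_H_of_mem hX (by omega) hpsX.1 hpsX.2 hi.2
  have hdim := hgen.dimS_add_le_of_forall_le hq1 hql hY
    (fun i hi hpi => biInter_subset_of_mem ⟨hi, hpi⟩) hpsX.2 hpos hsign hy₀ hmin
  have htau : tau X = tau (⋂ i ∈ t, A.H i) := by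
    refine Submodule.eq_of_le_of_finrank_eq (tau_mono hXY) ?_
    show dimS X = dimS _
    have := dimS_mono hXY
    omega
  rw [htau, tau_biInter_H hpsY]
  simp only [Submodule.mem_iInf, LinearMap.mem_ker]
  exact fun _ hi => hi.1

theorem exists_chamber_subset_sameSide (hgen : GenericFlag A 𝓕) (h1 : Cond1On A univ 𝓕)
    {qC : Set (Fin ℓ → ℝ) → ℕ} {XC : Set (Fin ℓ → ℝ) → Set (Fin ℓ → ℝ)}
    (hdata : ∀ C, A.IsChamber C → ChF A 𝓕 (qC C) C ∧ IsXC A 𝓕 (qC C) C (XC C))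
    (hx : x ∈ A.compOn {i | (A.α i).linear v = 0}) :
    ∃ C, A.IsChamber C ∧ C ⊆ A.sameSide {i | (A.α i).linear v = 0} x ∧ v ∈ tau (XC C) := by
  set D := A.sameSide {i | (A.α i).linear v = 0} x
  have hxℓ : (D ∩ 𝓕.F ℓ).Nonempty :=
    ⟨x, self_mem_sameSide hx, by rw [Flag.F_eq_univ le_rfl]; trivial⟩
  have hD : ∃ q, (D ∩ 𝓕.F q).Nonempty := ⟨ℓ, hxℓ⟩
  classical
  -- `q` is the first level of the flag met by `D`; all chambers of `D` meeting `F^q` lie in `ch^q`.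
  set q := Nat.find hD
  have hq : (D ∩ 𝓕.F q).Nonempty := Nat.find_spec hD
  have hql : q ≤ ℓ := Nat.find_min' hD hxℓ
  have hlevel : ∀ C, A.IsChamber C → C ⊆ D → (C ∩ 𝓕.F q).Nonempty → ChF A 𝓕 q C :=
    fun C hC hCD hCq => ⟨hC, hCq, or_iff_not_imp_left.2 fun _ => subset_empty_iff.1
      fun y hy => Nat.find_min hD (by omega) ⟨y, hCD hy.1, hy.2⟩⟩
  have hXC : ∀ C, A.IsChamber C → C ⊆ D → (C ∩ 𝓕.F q).Nonempty → IsXC A 𝓕 q C (XC C) :=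
    fun C hC hCD hCq => by
      rw [(hlevel C hC hCD hCq).eq (hdata C hC).1]
      exact (hdata C hC).2
  obtain ⟨C, hC, hCD, ps, hps, hpsC, hmin⟩ := hgen.exists_chamber_forall_le hql hq XC hXC
  have hCq : (C ∩ 𝓕.F q).Nonempty := closure_nonempty_iff.1 ⟨ps, hpsC⟩
  obtain ⟨hXL, hXd, -⟩ := hXC C hC hCD hCq
  have hpsX : ps ∈ XC C ∩ 𝓕.F q := hps ▸ rfl
  refine ⟨C, hC, hCD, ?_⟩
  rcases Nat.eq_zero_or_pos q with hq0 | hq1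
  · rw [hXL.eq_univ_of_dimS (by omega), tau_univ]
    exact Submodule.mem_top
  have hsign : ∀ i ∈ {i | (A.α i).linear v = 0}, A.α i ps ≠ 0 → 0 < A.α i x * A.α i ps :=
    fun i hi hpi => (mul_nonneg_of_mem_closure_sameSide
      (closure_mono (inter_subset_left.trans hCD) hpsC) hi).lt_of_ne
        (mul_ne_zero (hx i hi) hpi).symm
  exact hgen.mem_tau_of_forall_le hq1 hql hXL hXd hpsX
    (hgen.hq_pos h1 (hlevel C hC hCD hCq) hq1 hXL hXd hpsX hpsC) hsign hq.some_mem hmin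

end GenericFlag

end IY

namespace IY

open Arrangement

theorem M_eq_disjoint_union_S_general (ℓ n : ℕ) (A : Arrangement ℓ n) (𝓕 : Flag ℓ)
    (hgen : GenericFlag A 𝓕)
    (h1 : Cond1On A Set.univ 𝓕) (h2 : Cond2On A Set.univ 𝓕)
    (qC : Set (Fin ℓ → ℝ) → ℕ)
    (XC : Set (Fin ℓ → ℝ) → Set (Fin ℓ → ℝ))
    (pC : Set (Fin ℓ → ℝ) → (Fin ℓ → ℝ))
    (hdata : ∀ C, A.IsChamber C → ChF A 𝓕 (qC C) C ∧
        IsXC A 𝓕 (qC C) C (XC C) ∧ pC C ∈ C ∩ 𝓕.F (qC C)) :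
    (∀ C C', A.IsChamber C → A.IsChamber C' → C ≠ C' →
        S A (tau (XC C)) (pC C) ∩ S A (tau (XC C')) (pC C') = ∅) ∧
    A.M = ⋃ C ∈ {C : Set (Fin ℓ → ℝ) | A.IsChamber C}, S A (tau (XC C)) (pC C) := by
  have hS : ∀ C, A.IsChamber C → ∀ z, z ∈ S A (tau (XC C)) (pC C) ↔
      imP z ∈ tau (XC C) ∧ C ⊆ A.sameSide {i | (A.α i).linear (imP z) = 0} (reP z) :=
    fun C hC z => by rw [mem_S_iff, mem_sameSide_comm, hC.subset_sameSide_iff (hdata C hC).2.2.1]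
  refine ⟨fun C C' hC hC' hne => eq_empty_of_forall_notMem fun z ⟨hz, hz'⟩ => hne ?_, ?_⟩
  · rw [hS C hC] at hz
    rw [hS C' hC'] at hz'
    exact hgen.eq_of_subset_sameSide h1 h2 (hdata C hC).1 (hdata C hC).2.1 hz.1 hz.2
      (hdata C' hC').1 (hdata C' hC').2.1 hz'.1 hz'.2
  ext z
  rw [mem_M_iff, mem_iUnion₂]
  refine ⟨fun hz => ?_, fun ⟨C, _, hz⟩ => sameSide_subset_compOn (mem_S_iff.1 hz).2⟩
  obtain ⟨C, hC, hCD, hv⟩ :=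
    hgen.exists_chamber_subset_sameSide h1 (fun C hC => ⟨(hdata C hC).1, (hdata C hC).2.1⟩) hz
  exact ⟨C, hC, (hS C hC z).2 ⟨hv, hCD⟩⟩

/-- The complexified complement `M(A)` is the disjoint union
of the pieces `S(C)` over all chambers `C ∈ ch(A)`. -/
theorem M_eq_disjoint_union_S (ℓ n : ℕ) (A : Arrangement ℓ n) (𝓕 : Flag ℓ)
    (hind : LinearIndependent ℝ fun j : Fin ℓ => (𝓕.h j).linear)
    (hgen : GenericFlag A 𝓕)
    (h1 : Cond1On A Set.univ 𝓕) (h2 : Cond2On A Set.univ 𝓕)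
    (qC : Set (Fin ℓ → ℝ) → ℕ)
    (XC : Set (Fin ℓ → ℝ) → Set (Fin ℓ → ℝ))
    (pC : Set (Fin ℓ → ℝ) → (Fin ℓ → ℝ))
    (hdata : ∀ C, A.IsChamber C → ChF A 𝓕 (qC C) C ∧
        IsXC A 𝓕 (qC C) C (XC C) ∧ pC C ∈ C ∩ 𝓕.F (qC C)) :
    (∀ C C', A.IsChamber C → A.IsChamber C' → C ≠ C' →
        S A (tau (XC C)) (pC C) ∩ S A (tau (XC C')) (pC C') = ∅) ∧
    A.M = ⋃ C ∈ {C : Set (Fin ℓ → ℝ) | A.IsChamber C}, S A (tau (XC C)) (pC C) :=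
  M_eq_disjoint_union_S_general ℓ n A 𝓕 hgen h1 h2 qC XC pC hdata

end IY
end

section
/- For every C ∈ ch^q_F(A), the closure of S(C) in M(A) (i.e. M(A) intersected with the closure of S(C) in ℂ^ℓ) equals {x + iv ∈ M(A) : x ∈ tilde(C), v ∈ τ(X_C)}. -/
open Set

/-!
The real parts of points of `S(C)` stay in `tilde(C)`: the segment from `p_C` to `x` meets no
hyperplane parallel to `X_C`, since such a hyperplane kills every `v ∈ τ(X_C)`. As chambers are
sign sets, `tilde(C)` is convex and relatively closed in the complement of `A_{[X_C]}`, which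
gives one inclusion. Conversely, choose `w ∈ τ(X_C)` outside every `τ(H)` with
`τ(X_C) ⊄ τ(H)`; then `x + i(v + t w) ∈ S(C)` for all small `t > 0`, because every hyperplane
meeting `[p_C, x]` is of this kind.
-/

open Filter Topology

namespace IY

namespace Arrangement

variable {ℓ n : ℕ} {A : Arrangement ℓ n} {s : Set (Fin n)} {C : Set (Fin ℓ → ℝ)}

theorem continuous_reP : Continuous (reP (ℓ := ℓ)) :=
  continuous_pi fun j => Complex.continuous_re.comp (continuous_apply j)

theorem continuous_imP : Continuous (imP (ℓ := ℓ)) :=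
  continuous_pi fun j => Complex.continuous_im.comp (continuous_apply j)

theorem convex_sign (x : Fin ℓ → ℝ) : Convex ℝ {y | ∀ i ∈ s, 0 < A.α i x * A.α i y} := by
  simp only [ofPred_forall]
  exact convex_iInter₂ fun i _ => (convex_Ioi (0 : ℝ)).affine_preimage (A.α i x • A.α i)

theorem connectedComponentIn_compOn_s13 {x : Fin ℓ → ℝ} (hx : x ∈ A.compOn s) :
    connectedComponentIn (A.compOn s) x = {y | ∀ i ∈ s, 0 < A.α i x * A.α i y} := by
  refine Subset.antisymm (fun y hy i hi => ?_) ?_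
  · have hconn := isPreconnected_connectedComponentIn (F := A.compOn s) (x := x)
    have hcont := (A.α i).continuous_of_finiteDimensional.continuousOn
      (s := connectedComponentIn (A.compOn s) x)
    have hxC := mem_connectedComponentIn hx
    -- by the intermediate value theorem, `α i` would vanish somewhere on the component
    by_contra! hle
    obtain ⟨u, hu, hu0⟩ : 0 ∈ A.α i '' connectedComponentIn (A.compOn s) x := by
      rcases mul_nonpos_iff.1 hle with ⟨hx0, hy0⟩ | ⟨hx0, hy0⟩
      · exact hconn.intermediate_value hy hxC hcont ⟨hy0, hx0⟩
      · exact hconn.intermediate_value hxC hy hcont ⟨hx0, hy0⟩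
    exact connectedComponentIn_subset _ _ hu i hi hu0
  · have hsign : {y | ∀ i ∈ s, 0 < A.α i x * A.α i y} ⊆ A.compOn s := fun y hy i hi h0 => by
      simpa [h0] using hy i hi
    exact (convex_sign x).isPreconnected.subset_connectedComponentIn
      (fun i hi => mul_self_pos.2 (hx i hi)) hsign

namespace IsChamberOn

theorem exists_eq_sign (hC : A.IsChamberOn s C) :
    ∃ x ∈ A.compOn s, C = {y | ∀ i ∈ s, 0 < A.α i x * A.α i y} := by
  obtain ⟨x, hx, rfl⟩ := hC
  exact ⟨x, hx, connectedComponentIn_compOn_s13 hx⟩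

theorem subset_compOn (hC : A.IsChamberOn s C) : C ⊆ A.compOn s := by
  obtain ⟨x, -, rfl⟩ := hC
  exact connectedComponentIn_subset _ _

theorem eq_connectedComponentIn (hC : A.IsChamberOn s C) {p : Fin ℓ → ℝ} (hp : p ∈ C) :
    C = connectedComponentIn (A.compOn s) p := by
  obtain ⟨x, -, rfl⟩ := hC
  exact connectedComponentIn_eq hp

theorem convex (hC : A.IsChamberOn s C) : Convex ℝ C := by
  obtain ⟨x, -, rfl⟩ := hC.exists_eq_sign
  exact convex_sign x

theorem closure_inter_compOn_subset (hC : A.IsChamberOn s C) :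
    closure C ∩ A.compOn s ⊆ C := by
  obtain ⟨x, hx, rfl⟩ := hC.exists_eq_sign
  have hclosed : IsClosed {y | ∀ i ∈ s, 0 ≤ A.α i x * A.α i y} := by
    simp only [ofPred_forall]
    exact isClosed_biInter fun i _ => isClosed_le continuous_const
      (continuous_const.mul (A.α i).continuous_of_finiteDimensional)
  rintro y ⟨hy, hyc⟩ i hi
  have hle := closure_minimal (fun y hy i hi => (hy i hi).le) hclosed hy i hi
  exact hle.lt_of_ne (mul_ne_zero (hx i hi) (hyc i hi)).symm

end IsChamberOn

end Arrangement

open Arrangement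

section

variable {ℓ n : ℕ} {A : Arrangement ℓ n} {T : Submodule ℝ (Fin ℓ → ℝ)}
  {p : Fin ℓ → ℝ} {Ct : Set (Fin ℓ → ℝ)}

theorem eventually_add_mul_ne_zero {a b : ℝ} (hb : b ≠ 0) :
    ∀ᶠ t in 𝓝[>] 0, a + t * b ≠ 0 := by
  rcases eq_or_ne a 0 with rfl | ha
  · filter_upwards [self_mem_nhdsWithin] with t (ht : 0 < t)
    simpa using mul_ne_zero ht.ne' hb
  · have hcont : Continuous fun t : ℝ => a + t * b := by fun_prop
    exact ((hcont.tendsto' 0 a (by simp)).eventually_ne ha).filter_mono nhdsWithin_le_nhds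

theorem S_subset_preimage_reP
    (hCt : A.IsChamberOn {i | T ≤ LinearMap.ker (A.α i).linear} Ct) (hp : p ∈ Ct) :
    S A T p ⊆ reP ⁻¹' Ct := by
  rintro z ⟨hv, hsep⟩
  have hseg : segment ℝ p (reP z) ⊆ A.compOn {i | T ≤ LinearMap.ker (A.α i).linear} :=
    fun u hu i hi h0 => hsep i ⟨u, hu, h0⟩ (hi hv)
  rw [mem_preimage, hCt.eq_connectedComponentIn hp]
  exact (convex_segment _ _).isPreconnected.subset_connectedComponentIn
    (left_mem_segment ℝ _ _) hseg (right_mem_segment ℝ _ _)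

theorem M_inter_closure_S_subset
    (hCt : A.IsChamberOn {i | T ≤ LinearMap.ker (A.α i).linear} Ct) (hp : p ∈ Ct) :
    A.M ∩ closure (S A T p) ⊆ {z | z ∈ A.M ∧ reP z ∈ Ct ∧ imP z ∈ T} := by
  rintro z ⟨hzM, hz⟩
  have hv : imP z ∈ T :=
    closure_minimal (fun z hz => hz.1) (T.closed_of_finiteDimensional.preimage continuous_imP) hz
  have hx : reP z ∈ closure Ct :=
    continuous_reP.closure_preimage_subset Ct (closure_mono (S_subset_preimage_reP hCt hp) hz)
  exact ⟨hzM, hCt.closure_inter_compOn_subset ⟨hx, fun i hi h0 => hzM i ⟨h0, hi hv⟩⟩, hv⟩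

theorem subset_closure_S
    (hCt : A.IsChamberOn {i | T ≤ LinearMap.ker (A.α i).linear} Ct) (hp : p ∈ Ct) :
    {z | reP z ∈ Ct ∧ imP z ∈ T} ⊆ closure (S A T p) := by
  rintro z ⟨hx, hv⟩
  obtain ⟨w, hwT, hw⟩ := Module.Dual.exists_forall_mem_ne_zero_of_forall_exists T
    (fun i : {i // ¬T ≤ LinearMap.ker (A.α i).linear} => (A.α i).linear)
    fun i => by simpa [SetLike.not_le_iff_exists] using i.2
  have hsep : ∀ i, SepPt A p (reP z) i → ¬T ≤ LinearMap.ker (A.α i).linear :=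
    fun i ⟨u, hu, h0⟩ hi => hCt.subset_compOn (hCt.convex.segment_subset hp hx hu) i hi h0
  set f : ℝ → Fin ℓ → ℂ := fun t j => z j + ((t * w j : ℝ) : ℂ) * Complex.I
  have hre : ∀ t, reP (f t) = reP z := fun t => funext fun j => by simp [f, reP]
  have him : ∀ t, imP (f t) = imP z + t • w := fun t => funext fun j => by simp [f, imP]
  have hf : Tendsto f (𝓝[>] 0) (𝓝 z) := by
    have hcont : Continuous f := by fun_prop
    simpa [f] using (hcont.tendsto 0).mono_left nhdsWithin_le_nhds
  have hev : ∀ i, ∀ᶠ t in 𝓝[>] 0,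
      SepPt A p (reP z) i → (A.α i).linear (imP z) + t * (A.α i).linear w ≠ 0 := by
    intro i
    by_cases hi : SepPt A p (reP z) i
    · filter_upwards [eventually_add_mul_ne_zero (hw ⟨i, hsep i hi⟩)] with t ht _ using ht
    · exact Eventually.of_forall fun t hi' => absurd hi' hi
  refine mem_closure_of_tendsto hf ?_
  filter_upwards [eventually_all.2 hev] with t ht
  refine ⟨him t ▸ T.add_mem hv (T.smul_mem t hwT), fun i hi => ?_⟩
  rw [him, map_add, map_smul, smul_eq_mul]
  exact ht i (hre t ▸ hi)

theorem M_inter_closure_S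
    (hCt : A.IsChamberOn {i | T ≤ LinearMap.ker (A.α i).linear} Ct) (hp : p ∈ Ct) :
    A.M ∩ closure (S A T p) = {z | z ∈ A.M ∧ reP z ∈ Ct ∧ imP z ∈ T} :=
  (M_inter_closure_S_subset hCt hp).antisymm fun _ ⟨hzM, hz⟩ =>
    ⟨hzM, subset_closure_S hCt hp hz⟩

end

theorem closure_S_in_M_general (ℓ n : ℕ) (A : Arrangement ℓ n) (𝓕 : Flag ℓ)
    (q : ℕ)
    (C X : Set (Fin ℓ → ℝ))
    (pC : Fin ℓ → ℝ) (hpC : pC ∈ C ∩ 𝓕.F q)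
    (Ct : Set (Fin ℓ → ℝ)) (hCt : A.IsChamberOn (parIdx A X) Ct) (hCCt : C ⊆ Ct) :
    A.M ∩ closure (S A (tau X) pC) =
      {z : Fin ℓ → ℂ | z ∈ A.M ∧ reP z ∈ Ct ∧ imP z ∈ tau X} :=
  M_inter_closure_S hCt (hCCt hpC.1)

/-- The closure of `S(C)` in `M(A)` equals
`{x + iv ∈ M(A) : x ∈ tilde(C), v ∈ τ(X_C)}`. -/
theorem closure_S_in_M (ℓ n : ℕ) (A : Arrangement ℓ n) (𝓕 : Flag ℓ)
    (hind : LinearIndependent ℝ fun j : Fin ℓ => (𝓕.h j).linear)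
    (hgen : GenericFlag A 𝓕)
    (h1 : Cond1On A Set.univ 𝓕) (h2 : Cond2On A Set.univ 𝓕)
    (q : ℕ) (hq2 : q ≤ ℓ)
    (C X : Set (Fin ℓ → ℝ))
    (hC : ChF A 𝓕 q C) (hX : IsXC A 𝓕 q C X)
    (pC : Fin ℓ → ℝ) (hpC : pC ∈ C ∩ 𝓕.F q)
    (Ct : Set (Fin ℓ → ℝ)) (hCt : A.IsChamberOn (parIdx A X) Ct) (hCCt : C ⊆ Ct) :
    A.M ∩ closure (S A (tau X) pC) =
      {z : Fin ℓ → ℂ | z ∈ A.M ∧ reP z ∈ Ct ∧ imP z ∈ tau X} :=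
  closure_S_in_M_general ℓ n A 𝓕 q C X pC hpC Ct hCt hCCt

end IY
end
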